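/- Let k be a field, e ≥ 2 an integer, and ζ ∈ k a primitive e-th root of unity. Let A = k[[x,y]]/(xy), and let σ be the k-algebra automorphism of A induced by the substitution x ↦ ζx, y ↦ ζ⁻¹y. Then: (1) the subring of σ-invariants of A equals the image of the k-algebra homomorphism k[[u,v]]/(uv) → A sending the class of u to x̄^e and the class of v to ȳ^e; (2) for each integer α with 1 ≤ α ≤ e−1, the eigenspace {f ∈ A : σ(f) = ζ^α·f} equals the set of elements of the form x̄^α·F(x̄^e) + ȳ^{e−α}·G(ȳ^e) with F, G ∈ k[[T]]. -/

import Mathlib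

open scoped Classical in
/-- The monomial substitution `ι : k[[u,v]] → k[[x,y]]`, `u ↦ x^e`, `v ↦ y^e`
(variable `0` is `u`/`x`, variable `1` is `v`/`y`), given on coefficients by
reindexing the exponents. -/
noncomputable def monSubst (k : Type*) [CommRing k] (e : ℕ)
    (F : MvPowerSeries (Fin 2) k) : MvPowerSeries (Fin 2) k :=
  fun n => if ∀ i, e ∣ n i then
    MvPowerSeries.coeff (Finsupp.mapRange (· / e) (Nat.zero_div e) n) F else 0

open scoped Classical in
/-- The embedding `k[[T]] → k[[x,y]]` sending a one-variable power series `f` to the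
power series `f` in the variable of index `i` (so `embX k 0 f = f(x)` and
`embX k 1 g = g(y)`), given on coefficients in the obvious way. -/
noncomputable def embX (k : Type*) [CommRing k] (i : Fin 2) (f : PowerSeries k) :
    MvPowerSeries (Fin 2) k :=
  fun n => if n = Finsupp.single i (n i) then PowerSeries.coeff (n i) f else 0

/-- The substitution `x ↦ ζx`, `y ↦ ζ⁻¹y` on `k[[x,y]]`, inducing the automorphism `σ`
of `A = k[[x,y]]/(xy)`; on the coefficient of `x^a y^b` it is multiplication by
`ζ^a · ζ⁻¹^b`. -/
noncomputable def diagAct {k : Type*} [Field k] (ζ : k) (F : MvPowerSeries (Fin 2) k) :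
    MvPowerSeries (Fin 2) k :=
  fun n => ζ ^ (n 0) * ζ⁻¹ ^ (n 1) * MvPowerSeries.coeff n F

section Aux

open MvPowerSeries

variable {k : Type*} [Field k]

private lemma fin2_single0 (n : Fin 2 →₀ ℕ) (h : n 1 = 0) :
    n = Finsupp.single 0 (n 0) := by
  ext i
  fin_cases i
  · simp
  · simpa [Finsupp.single_apply] using h

private lemma fin2_single1 (n : Fin 2 →₀ ℕ) (h : n 0 = 0) :
    n = Finsupp.single 1 (n 1) := by
  ext i
  fin_cases i
  · simpa [Finsupp.single_apply] using h
  · simp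

private lemma mem_span_iff' (f : MvPowerSeries (Fin 2) k) :
    f ∈ Ideal.span {(X 0 * X 1 : MvPowerSeries (Fin 2) k)} ↔
      ∀ n : Fin 2 →₀ ℕ, (n 0 = 0 ∨ n 1 = 0) → MvPowerSeries.coeff n f = 0 := by
  classical
  have hXX : (X 0 * X 1 : MvPowerSeries (Fin 2) k)
      = monomial (Finsupp.single 0 1 + Finsupp.single 1 1) 1 := by
    rw [X_def, X_def, monomial_mul_monomial, one_mul]
  have hm0 : (Finsupp.single 0 1 + Finsupp.single 1 1 : Fin 2 →₀ ℕ) 0 = 1 := by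
    simp [Finsupp.single_apply]
  have hm1 : (Finsupp.single 0 1 + Finsupp.single 1 1 : Fin 2 →₀ ℕ) 1 = 1 := by
    simp [Finsupp.single_apply]
  constructor
  · intro h n hn
    obtain ⟨g, hg⟩ := Ideal.mem_span_singleton.mp h
    rw [hg, hXX, coeff_monomial_mul, if_neg]
    intro hle
    rw [Finsupp.le_def] at hle
    rcases hn with h0 | h1
    · have := hle 0; rw [hm0, h0] at this; omega
    · have := hle 1; rw [hm1, h1] at this; omega
  · intro h
    refine Ideal.mem_span_singleton.mpr
      ⟨@id (MvPowerSeries (Fin 2) k)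
        (fun n => MvPowerSeries.coeff (n + (Finsupp.single 0 1 + Finsupp.single 1 1)) f), ?_⟩
    ext n
    rw [hXX, coeff_monomial_mul]
    by_cases hle : Finsupp.single 0 1 + Finsupp.single 1 1 ≤ n
    · rw [if_pos hle, one_mul]
      show _ = MvPowerSeries.coeff (n - (Finsupp.single 0 1 + Finsupp.single 1 1)
        + (Finsupp.single 0 1 + Finsupp.single 1 1)) f
      rw [tsub_add_cancel_of_le hle]
    · rw [if_neg hle]
      apply h
      by_contra hcon
      push_neg at hcon
      apply hle
      rw [Finsupp.le_def, Fin.forall_fin_two]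
      exact ⟨by rw [hm0]; omega, by rw [hm1]; omega⟩

private lemma coeff_Xpow_mul (i : Fin 2) (b : ℕ) (S : MvPowerSeries (Fin 2) k)
    (n : Fin 2 →₀ ℕ) :
    MvPowerSeries.coeff n (X i ^ b * S) =
      if b ≤ n i then MvPowerSeries.coeff (n - Finsupp.single i b) S else 0 := by
  classical
  rw [X_pow_eq, coeff_monomial_mul]
  simp [Finsupp.single_le_iff]

private lemma monSubst_apply (e : ℕ) (F : MvPowerSeries (Fin 2) k) (n : Fin 2 →₀ ℕ) :
    MvPowerSeries.coeff n (monSubst k e F) = if ∀ i, e ∣ n i then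
      MvPowerSeries.coeff (Finsupp.mapRange (· / e) (Nat.zero_div e) n) F else 0 := rfl

private lemma coeff_monSubst_embX0 (e : ℕ) (he : 0 < e) (F : PowerSeries k)
    (n : Fin 2 →₀ ℕ) :
    MvPowerSeries.coeff n (monSubst k e (embX k 0 F)) =
      if e ∣ n 0 ∧ n 1 = 0 then PowerSeries.coeff (n 0 / e) F else 0 := by
  classical
  rw [monSubst_apply]
  by_cases h : ∀ i, e ∣ n i
  · rw [if_pos h]
    set m := Finsupp.mapRange (· / e) (Nat.zero_div e) n with hm
    have hm0 : m 0 = n 0 / e := Finsupp.mapRange_apply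
    have hm1 : m 1 = n 1 / e := Finsupp.mapRange_apply
    show (if m = Finsupp.single 0 (m 0) then PowerSeries.coeff (m 0) F else 0) = _
    by_cases h1 : n 1 = 0
    · have hms : m = Finsupp.single 0 (m 0) := by
        apply fin2_single0
        rw [hm1, h1, Nat.zero_div]
      rw [if_pos hms, if_pos ⟨h 0, h1⟩, hm0]
    · rw [if_neg, if_neg]
      · exact fun hc => h1 hc.2
      · intro hc
        apply h1
        obtain ⟨q, hq⟩ := h 1
        have hq0 : m 1 = 0 := by
          rw [hc]; simp [Finsupp.single_apply]
        rw [hm1, hq, Nat.mul_div_cancel_left q he] at hq0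
        rw [hq, hq0, Nat.mul_zero]
  · rw [if_neg h, if_neg]
    rintro ⟨hc0, hc1⟩
    apply h
    rw [Fin.forall_fin_two]
    exact ⟨hc0, by rw [hc1]; exact dvd_zero e⟩

private lemma coeff_monSubst_embX1 (e : ℕ) (he : 0 < e) (G : PowerSeries k)
    (n : Fin 2 →₀ ℕ) :
    MvPowerSeries.coeff n (monSubst k e (embX k 1 G)) =
      if e ∣ n 1 ∧ n 0 = 0 then PowerSeries.coeff (n 1 / e) G else 0 := by
  classical
  rw [monSubst_apply]
  by_cases h : ∀ i, e ∣ n i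
  · rw [if_pos h]
    set m := Finsupp.mapRange (· / e) (Nat.zero_div e) n with hm
    have hm0 : m 0 = n 0 / e := Finsupp.mapRange_apply
    have hm1 : m 1 = n 1 / e := Finsupp.mapRange_apply
    show (if m = Finsupp.single 1 (m 1) then PowerSeries.coeff (m 1) G else 0) = _
    by_cases h0 : n 0 = 0
    · have hms : m = Finsupp.single 1 (m 1) := by
        apply fin2_single1
        rw [hm0, h0, Nat.zero_div]
      rw [if_pos hms, if_pos ⟨h 1, h0⟩, hm1]
    · rw [if_neg, if_neg]
      · exact fun hc => h0 hc.2
      · intro hc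
        apply h0
        obtain ⟨q, hq⟩ := h 0
        have hq0 : m 0 = 0 := by
          rw [hc]; simp [Finsupp.single_apply]
        rw [hm0, hq, Nat.mul_div_cancel_left q he] at hq0
        rw [hq, hq0, Nat.mul_zero]
  · rw [if_neg h, if_neg]
    rintro ⟨hc1, hc0⟩
    apply h
    rw [Fin.forall_fin_two]
    exact ⟨by rw [hc0]; exact dvd_zero e, hc1⟩

private lemma coeff_rhs (e α : ℕ) (he : 0 < e) (F G : PowerSeries k) (n : Fin 2 →₀ ℕ) :
    MvPowerSeries.coeff n (X 0 ^ α * monSubst k e (embX k 0 F) +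
        X 1 ^ (e - α) * monSubst k e (embX k 1 G)) =
      (if α ≤ n 0 ∧ e ∣ n 0 - α ∧ n 1 = 0 then
        PowerSeries.coeff ((n 0 - α) / e) F else 0) +
      (if e - α ≤ n 1 ∧ e ∣ n 1 - (e - α) ∧ n 0 = 0 then
        PowerSeries.coeff ((n 1 - (e - α)) / e) G else 0) := by
  classical
  have e01 : (0 : Fin 2) ≠ 1 := by decide
  have e10 : (1 : Fin 2) ≠ 0 := by decide
  rw [map_add, coeff_Xpow_mul, coeff_Xpow_mul, coeff_monSubst_embX0 e he,
      coeff_monSubst_embX1 e he]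
  simp only [Finsupp.tsub_apply, Finsupp.single_eq_same, Finsupp.single_eq_of_ne e01,
    Finsupp.single_eq_of_ne e10, Nat.sub_zero]
  congr 1
  · split_ifs <;> first | rfl | tauto
  · split_ifs <;> first | rfl | tauto

variable {e : ℕ} {ζ : k}

private lemma pow_mod_eq (hζ : IsPrimitiveRoot ζ e) (a : ℕ) : ζ ^ a = ζ ^ (a % e) := by
  conv_lhs => rw [← Nat.div_add_mod a e]
  rw [pow_add, pow_mul, hζ.pow_eq_one, one_pow, one_mul]

private lemma pow_eq_pow_iff' (hζ : IsPrimitiveRoot ζ e) (he : 0 < e) (a b : ℕ) :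
    ζ ^ a = ζ ^ b ↔ a % e = b % e := by
  rw [pow_mod_eq hζ a, pow_mod_eq hζ b]
  exact ⟨hζ.pow_inj (Nat.mod_lt a he) (Nat.mod_lt b he), fun h => by rw [h]⟩

private lemma inv_pow_eq_iff (hζ : IsPrimitiveRoot ζ e) (he : 0 < e) (b m : ℕ) :
    ζ⁻¹ ^ m = ζ ^ b ↔ e ∣ m + b := by
  have hne : ζ ≠ 0 := by
    intro h
    have h1 := hζ.pow_eq_one
    rw [h, zero_pow he.ne'] at h1
    exact zero_ne_one h1
  rw [inv_pow, ← hζ.pow_eq_one_iff_dvd, pow_add]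
  constructor
  · intro h
    rw [← h, mul_inv_cancel₀ (pow_ne_zero m hne)]
  · intro h
    exact (eq_inv_of_mul_eq_one_left (by rw [mul_comm]; exact h)).symm

private lemma dvd_add_iff_mod (e α : ℕ) (he : 2 ≤ e) (h1 : 1 ≤ α) (h2 : α ≤ e - 1)
    (m : ℕ) : e ∣ m + α ↔ m % e = e - α := by
  have hα : α < e := by omega
  have hm : m % e < e := Nat.mod_lt m (by omega)
  rw [Nat.dvd_iff_mod_eq_zero, Nat.add_mod, Nat.mod_eq_of_lt hα]
  by_cases hc : m % e + α < e
  · rw [Nat.mod_eq_of_lt hc]; omega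
  · rw [Nat.mod_eq_sub_mod (by omega), Nat.mod_eq_of_lt (by omega)]; omega

private lemma cond_iff_mod (e α r : ℕ) (he : 0 < e) (hα : α < e) :
    (α ≤ r ∧ e ∣ r - α) ↔ r % e = α := by
  constructor
  · rintro ⟨h1, q, hq⟩
    have hr : r = α + e * q := by rw [← hq, Nat.add_sub_cancel' h1]
    rw [hr, Nat.add_mul_mod_self_left, Nat.mod_eq_of_lt hα]
  · intro h
    have h1 : α ≤ r := h ▸ Nat.mod_le r e
    refine ⟨h1, r / e, ?_⟩
    have hd := Nat.div_add_mod r e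
    rw [h] at hd
    exact Nat.sub_eq_of_eq_add hd.symm

private lemma add_mul_div (e α r : ℕ) (he : 0 < e) (h : r % e = α) :
    α + e * ((r - α) / e) = r := by
  have hd := Nat.div_add_mod r e
  rw [h] at hd
  have h2 : r - α = e * (r / e) := Nat.sub_eq_of_eq_add hd.symm
  rw [h2, Nat.mul_div_cancel_left _ he, Nat.add_comm]
  exact hd

end Aux

/-- Let `k` be a field, `e ≥ 2`, `ζ ∈ k` a primitive `e`-th root of unity,
`A = k[[x,y]]/(xy)` and `σ` the automorphism of `A` induced by `x ↦ ζx`, `y ↦ ζ⁻¹y`.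
Then: (1) the `σ`-invariants of `A` form the image of `k[[u,v]]/(uv) → A`,
`u ↦ x̄^e`, `v ↦ ȳ^e`; (2) for `1 ≤ α ≤ e - 1`, the eigenspace `{f̄ : σ f̄ = ζ^α f̄}`
consists of the classes of the elements `x^α F(x^e) + y^(e-α) G(y^e)` with
`F, G ∈ k[[T]]`.  (Equalities in `A` are expressed as membership of the difference of
representatives in the ideal `(xy)`.) -/
theorem stmt12 {k : Type*} [Field k] (e : ℕ) (he : 2 ≤ e) (ζ : k)
    (hζ : IsPrimitiveRoot ζ e) :
    (∀ a : MvPowerSeries (Fin 2) k,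
      diagAct ζ a - a ∈
          Ideal.span {(MvPowerSeries.X 0 * MvPowerSeries.X 1 : MvPowerSeries (Fin 2) k)} ↔
        ∃ F : MvPowerSeries (Fin 2) k,
          a - monSubst k e F ∈
            Ideal.span {(MvPowerSeries.X 0 * MvPowerSeries.X 1 : MvPowerSeries (Fin 2) k)}) ∧
    (∀ α : ℕ, 1 ≤ α → α ≤ e - 1 → ∀ a : MvPowerSeries (Fin 2) k,
      diagAct ζ a - (MvPowerSeries.C (ζ ^ α) : MvPowerSeries (Fin 2) k) * a ∈
          Ideal.span {(MvPowerSeries.X 0 * MvPowerSeries.X 1 : MvPowerSeries (Fin 2) k)} ↔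
        ∃ F G : PowerSeries k,
          a - (MvPowerSeries.X 0 ^ α * monSubst k e (embX k 0 F) +
              MvPowerSeries.X 1 ^ (e - α) * monSubst k e (embX k 1 G)) ∈
            Ideal.span {(MvPowerSeries.X 0 * MvPowerSeries.X 1 : MvPowerSeries (Fin 2) k)}) := by
  classical
  have he0 : 0 < e := by omega
  constructor
  · -- Part 1
    intro a
    constructor
    · intro h
      rw [mem_span_iff'] at h
      refine ⟨@id (MvPowerSeries (Fin 2) k)
        (fun m => MvPowerSeries.coeff (Finsupp.mapRange (· * e) (zero_mul e) m) a), ?_⟩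
      rw [mem_span_iff']
      intro n hn
      rw [map_sub, monSubst_apply]
      by_cases hd : ∀ i, e ∣ n i
      · rw [if_pos hd]
        have hmm : Finsupp.mapRange (· * e) (zero_mul e)
            (Finsupp.mapRange (· / e) (Nat.zero_div e) n) = n := by
          ext i
          rw [Finsupp.mapRange_apply, Finsupp.mapRange_apply]
          exact Nat.div_mul_cancel (hd i)
        show MvPowerSeries.coeff n a - MvPowerSeries.coeff (Finsupp.mapRange (· * e) (zero_mul e)
          (Finsupp.mapRange (· / e) (Nat.zero_div e) n)) a = 0
        rw [hmm, sub_self]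
      · rw [if_neg hd, sub_zero, MvPowerSeries.coeff_apply]
        have h2 : ζ ^ n 0 * ζ⁻¹ ^ n 1 * a n - a n = 0 := h n hn
        have h3 : (ζ ^ n 0 * ζ⁻¹ ^ n 1 - 1) * a n = 0 := by
          rw [sub_mul, one_mul]; exact h2
        rcases mul_eq_zero.mp h3 with hc | ha
        · exfalso
          apply hd
          rw [sub_eq_zero] at hc
          rcases hn with h0 | h1
          · rw [h0, pow_zero, one_mul, inv_pow, inv_eq_one] at hc
            have hd1 : e ∣ n 1 := (hζ.pow_eq_one_iff_dvd _).mp hc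
            rw [Fin.forall_fin_two]
            exact ⟨by rw [h0]; exact dvd_zero e, hd1⟩
          · rw [h1, pow_zero, mul_one] at hc
            have hd0 : e ∣ n 0 := (hζ.pow_eq_one_iff_dvd _).mp hc
            rw [Fin.forall_fin_two]
            exact ⟨hd0, by rw [h1]; exact dvd_zero e⟩
        · exact ha
    · rintro ⟨F, hF⟩
      rw [mem_span_iff'] at hF ⊢
      intro n hn
      have h2 := hF n hn
      rw [map_sub, sub_eq_zero] at h2
      rw [map_sub, sub_eq_zero]
      show ζ ^ n 0 * ζ⁻¹ ^ n 1 * MvPowerSeries.coeff n a = MvPowerSeries.coeff n a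
      by_cases hd : ∀ i, e ∣ n i
      · have h0 : ζ ^ n 0 = 1 := (hζ.pow_eq_one_iff_dvd _).mpr (hd 0)
        have h1 : ζ⁻¹ ^ n 1 = 1 := by
          rw [inv_pow, inv_eq_one]
          exact (hζ.pow_eq_one_iff_dvd _).mpr (hd 1)
        rw [h0, h1, one_mul, one_mul]
      · have hz : MvPowerSeries.coeff n a = 0 := by
          rw [h2, monSubst_apply, if_neg hd]
        rw [hz, mul_zero]
  · -- Part 2
    intro α hα1 hα2 a
    have hαe : α < e := by omega
    have hβ1 : 1 ≤ e - α := by omega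
    have hβe : e - α < e := by omega
    constructor
    · intro h
      rw [mem_span_iff'] at h
      refine ⟨PowerSeries.mk (fun j => a (Finsupp.single 0 (α + e * j))),
              PowerSeries.mk (fun j => a (Finsupp.single 1 ((e - α) + e * j))), ?_⟩
      rw [mem_span_iff']
      intro n hn
      rw [map_sub, coeff_rhs e α he0, MvPowerSeries.coeff_apply, sub_eq_zero]
      have h2 : (ζ ^ n 0 * ζ⁻¹ ^ n 1 - ζ ^ α) * a n = 0 := by
        have h3 := h n hn
        rw [map_sub, MvPowerSeries.coeff_C_mul] at h3
        rw [sub_mul]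
        exact h3
      rcases hn with h0 | h1
      · -- n 0 = 0
        have hneg1 : ¬(α ≤ n 0 ∧ e ∣ n 0 - α ∧ n 1 = 0) := by rintro ⟨hc, -⟩; omega
        rw [if_neg hneg1]
        by_cases hm : n 1 % e = e - α
        · obtain ⟨hb, hdvd⟩ := (cond_iff_mod e (e - α) (n 1) he0 hβe).mpr hm
          have hpos : e - α ≤ n 1 ∧ e ∣ n 1 - (e - α) ∧ n 0 = 0 := ⟨hb, hdvd, h0⟩
          rw [if_pos hpos, PowerSeries.coeff_mk,
            add_mul_div e (e - α) (n 1) he0 hm, zero_add, ← fin2_single1 n h0]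
        · have hneg2 : ¬(e - α ≤ n 1 ∧ e ∣ n 1 - (e - α) ∧ n 0 = 0) :=
            fun hc => hm ((cond_iff_mod e (e - α) (n 1) he0 hβe).mp ⟨hc.1, hc.2.1⟩)
          rw [if_neg hneg2, add_zero]
          rcases mul_eq_zero.mp h2 with hc | ha
          · exfalso
            apply hm
            rw [sub_eq_zero, h0, pow_zero, one_mul] at hc
            exact (dvd_add_iff_mod e α he hα1 hα2 (n 1)).mp
              ((inv_pow_eq_iff hζ he0 α (n 1)).mp hc)
          · exact ha
      · -- n 1 = 0
        have hneg2 : ¬(e - α ≤ n 1 ∧ e ∣ n 1 - (e - α) ∧ n 0 = 0) := by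
          rintro ⟨hc, -⟩; omega
        rw [if_neg hneg2, add_zero]
        by_cases hm : n 0 % e = α
        · obtain ⟨hb, hdvd⟩ := (cond_iff_mod e α (n 0) he0 hαe).mpr hm
          have hpos : α ≤ n 0 ∧ e ∣ n 0 - α ∧ n 1 = 0 := ⟨hb, hdvd, h1⟩
          rw [if_pos hpos, PowerSeries.coeff_mk,
            add_mul_div e α (n 0) he0 hm, ← fin2_single0 n h1]
        · have hneg1 : ¬(α ≤ n 0 ∧ e ∣ n 0 - α ∧ n 1 = 0) :=
            fun hc => hm ((cond_iff_mod e α (n 0) he0 hαe).mp ⟨hc.1, hc.2.1⟩)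
          rw [if_neg hneg1]
          rcases mul_eq_zero.mp h2 with hc | ha
          · exfalso
            apply hm
            rw [sub_eq_zero, h1, pow_zero, mul_one] at hc
            rw [pow_eq_pow_iff' hζ he0] at hc
            rw [hc, Nat.mod_eq_of_lt hαe]
          · exact ha
    · rintro ⟨F, G, hFG⟩
      rw [mem_span_iff'] at hFG ⊢
      intro n hn
      have h2 := hFG n hn
      rw [map_sub, sub_eq_zero, coeff_rhs e α he0, MvPowerSeries.coeff_apply] at h2
      rw [map_sub, MvPowerSeries.coeff_C_mul, sub_eq_zero]
      show ζ ^ n 0 * ζ⁻¹ ^ n 1 * MvPowerSeries.coeff n a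
          = ζ ^ α * MvPowerSeries.coeff n a
      rcases hn with h0 | h1
      · rw [h0, pow_zero, one_mul]
        by_cases hm : n 1 % e = e - α
        · have hc : ζ⁻¹ ^ n 1 = ζ ^ α := (inv_pow_eq_iff hζ he0 α (n 1)).mpr
            ((dvd_add_iff_mod e α he hα1 hα2 (n 1)).mpr hm)
          rw [hc]
        · have hz : a n = 0 := by
            have hneg1 : ¬(α ≤ n 0 ∧ e ∣ n 0 - α ∧ n 1 = 0) := by rintro ⟨hc, -⟩; omega
            have hneg2 : ¬(e - α ≤ n 1 ∧ e ∣ n 1 - (e - α) ∧ n 0 = 0) :=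
              fun hc => hm ((cond_iff_mod e (e - α) (n 1) he0 hβe).mp ⟨hc.1, hc.2.1⟩)
            rw [h2, if_neg hneg1, if_neg hneg2, add_zero]
          show ζ⁻¹ ^ n 1 * a n = ζ ^ α * a n
          rw [hz, mul_zero, mul_zero]
      · rw [h1, pow_zero, mul_one]
        by_cases hm : n 0 % e = α
        · have hc : ζ ^ n 0 = ζ ^ α := by
            rw [pow_eq_pow_iff' hζ he0, hm, Nat.mod_eq_of_lt hαe]
          rw [hc]
        · have hz : a n = 0 := by
            have hneg1 : ¬(α ≤ n 0 ∧ e ∣ n 0 - α ∧ n 1 = 0) :=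
              fun hc => hm ((cond_iff_mod e α (n 0) he0 hαe).mp ⟨hc.1, hc.2.1⟩)
            have hneg2 : ¬(e - α ≤ n 1 ∧ e ∣ n 1 - (e - α) ∧ n 0 = 0) := by
              rintro ⟨hc, -⟩; omega
            rw [h2, if_neg hneg1, if_neg hneg2, add_zero]
          show ζ ^ n 0 * a n = ζ ^ α * a n
          rw [hz, mul_zero, mul_zero]
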